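/- Let (Ω, 𝒜, P) be a probability space with filtration (ℱ_t)_{t≥0}, let (Δ_t)_{t≥1} and (Δ'_t)_{t≥1} be real random variables with Δ_t and Δ'_t ℱ_t-measurable and E[Δ_t | ℱ_{t−1}] = 0, E[Δ'_t | ℱ_{t−1}] = 0 almost surely. Fix b > 0 with |Δ_t| ≤ b almost surely for all t ≥ 1, and a nonnegative sequence (σ_t)_{t≥2} with |Δ_t − Δ'_t| ≤ σ_t almost surely for all t ≥ 2. Let (γ_t)_{t≥2} be in [0,1), set Γ_1 = 1, Γ_t = ∏_{i=2}^{t}(1−γ_i), M_1 = Δ_1, M_t = Δ_t − (1−γ_t)·Δ'_t + (1−γ_t)·M_{t−1}, and define V_1 = b², V_t = (γ_t·b + (1−γ_t)·σ_t)² + (1−γ_t)²·V_{t−1}. Then for every c > 0 and every T ≥ 1, P( there exists t ∈ {1,…,T} with |M_t| ≥ √(c/(2·V_T)) · ( V_T·Γ_t/Γ_T + V_t·Γ_T/Γ_t ) ) ≤ 2·exp(−c). -/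

import Mathlib

/-!
Rescaling by the decay products turns the OEUVRE recursion into a sum: `Mₜ = Γₜ Sₜ` with
`Sₜ = ∑_{i<t} dᵢ`, where `dᵢ` are martingale differences bounded by constants `κᵢ`, and
`Vₜ = Γₜ² Wₜ` with `Wₜ = ∑_{i<t} κᵢ²`. By the conditional Hoeffding lemma
`exp (L Sₜ - L² Wₜ / 2)` is a nonnegative supermartingale, so Ville's maximal inequality bounds
the probability that `L Sₜ - L² Wₜ / 2` ever exceeds `c` by `exp (-c)`. With `L = 2s` and
`s = √(c / (2 W_T))` this crossing event is `s (W_T + Wₜ) ≤ Sₜ`, the linear boundary tangent to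
the Gaussian one at time `T`; undoing the rescaling gives the stated boundary for `|Mₜ|`, and the
two tails give the factor `2`.
-/

open MeasureTheory

namespace Real

/-- The chord of `exp` over `[-Lκ, Lκ]` lies above its graph. -/
lemma exp_mul_le_cosh_add_mul {L x κ : ℝ} (hx : |x| ≤ κ) :
    exp (L * x) ≤ cosh (L * κ) + sinh (L * κ) / κ * x := by
  obtain ⟨hκx, hxκ⟩ := abs_le.mp hx
  rcases (abs_nonneg x |>.trans hx).eq_or_lt with rfl | hκ
  · obtain rfl : x = 0 := by linarith
    simp
  have h := convexOn_exp.2 (Set.mem_univ (-(L * κ))) (Set.mem_univ (L * κ))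
    (div_nonneg (by linarith) (by positivity) : 0 ≤ (κ - x) / (2 * κ))
    (div_nonneg (by linarith) (by positivity) : 0 ≤ (κ + x) / (2 * κ))
    (by field_simp; ring)
  have harg : ((κ - x) / (2 * κ)) • (-(L * κ)) + ((κ + x) / (2 * κ)) • (L * κ) = L * x := by
    simp only [smul_eq_mul]; field_simp; ring
  rw [harg] at h
  refine h.trans_eq ?_
  simp only [smul_eq_mul, cosh_eq, sinh_eq]
  field_simp
  ring

end Real

section Hoeffding

variable {Ω : Type*} {m m0 : MeasurableSpace Ω} {μ : Measure Ω} [IsFiniteMeasure μ]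

theorem condExp_exp_mul_le_of_abs_le (hm : m ≤ m0) {d : Ω → ℝ} (hd : AEStronglyMeasurable d μ)
    {κ : ℝ} (hbd : ∀ᵐ ω ∂μ, |d ω| ≤ κ) (hcond : μ[d|m] =ᵐ[μ] 0) (L : ℝ) :
    μ[fun ω => Real.exp (L * d ω)|m] ≤ᵐ[μ] fun _ => Real.exp (L ^ 2 * κ ^ 2 / 2) := by
  set s := Real.sinh (L * κ) / κ
  have hd_int : Integrable d μ := .of_bound hd κ hbd
  have hexp_int : Integrable (fun ω => Real.exp (L * d ω)) μ :=
    ProbabilityTheory.integrable_exp_mul_of_mem_Icc hd.aemeasurable (hbd.mono fun _ => abs_le.mp)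
  have hchord : μ[fun ω => Real.cosh (L * κ) + s * d ω|m] =ᵐ[μ] fun _ => Real.cosh (L * κ) := by
    change μ[(fun _ => Real.cosh (L * κ)) + s • d|m] =ᵐ[μ] _
    filter_upwards [condExp_add (integrable_const (Real.cosh (L * κ))) (hd_int.smul s) m,
      condExp_smul (m := m) s d, hcond] with ω h₁ h₂ h₃
    simp only [Pi.add_apply, Pi.smul_apply, condExp_const hm, smul_eq_mul] at h₁ h₂
    rw [h₁, h₂, h₃, Pi.zero_apply, mul_zero, add_zero]
  refine (condExp_mono hexp_int ((integrable_const _).add (hd_int.const_mul s))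
    (hbd.mono fun ω h => Real.exp_mul_le_cosh_add_mul h)).trans hchord.le |>.trans ?_
  refine .of_forall fun _ => (Real.cosh_le_exp_half_sq _).trans_eq ?_
  rw [mul_pow]

end Hoeffding

section Ville

variable {Ω : Type*} {m0 : MeasurableSpace Ω} {μ : Measure Ω} [IsFiniteMeasure μ]
  {𝒢 : Filtration ℕ m0}

/-- Ville's maximal inequality for a nonnegative supermartingale on a finite horizon. -/
theorem MeasureTheory.Supermartingale.measure_exists_ge_le {X : ℕ → Ω → ℝ}
    (hX : Supermartingale X 𝒢 μ) (hnn : ∀ t ω, 0 ≤ X t ω) {a : ℝ} (ha : 0 < a) (T : ℕ) :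
    μ {ω | ∃ t ≤ T, a ≤ X t ω} ≤ ENNReal.ofReal ((∫ ω, X 0 ω ∂μ) / a) := by
  set τ : Ω → ℕ∞ := fun ω => (hittingBtwn X (Set.Ici a) 0 T ω : ℕ)
  have hτ : IsStoppingTime 𝒢 τ :=
    hX.stronglyAdapted.adapted.isStoppingTime_hittingBtwn measurableSet_Ici
  have hτT : ∀ ω, τ ω ≤ T := fun ω => WithTop.coe_le_coe.mpr (hittingBtwn_le ω)
  have hsub : {ω | ∃ t ≤ T, a ≤ X t ω} ⊆ {ω | a ≤ stoppedValue X τ ω} :=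
    fun ω ⟨t, ht, hat⟩ => stoppedValue_hittingBtwn_mem ⟨t, ⟨Nat.zero_le t, ht⟩, hat⟩
  have hmarkov := mul_meas_ge_le_integral_of_nonneg (.of_forall fun ω => hnn _ ω)
    (integrable_stoppedValue ℕ hτ hX.integrable hτT) a
  have hstop : ∫ ω, stoppedValue X τ ω ∂μ ≤ ∫ ω, X 0 ω ∂μ := by
    have := hX.neg.expected_stoppedValue_mono (isStoppingTime_const 𝒢 0) hτ
      (fun ω => bot_le) hτT
    simpa [stoppedValue, integral_neg] using this
  calc μ {ω | ∃ t ≤ T, a ≤ X t ω} ≤ μ {ω | a ≤ stoppedValue X τ ω} := measure_mono hsub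
    _ = ENNReal.ofReal (μ.real {ω | a ≤ stoppedValue X τ ω}) :=
      (ofReal_measureReal (measure_ne_top _ _)).symm
    _ ≤ ENNReal.ofReal ((∫ ω, X 0 ω ∂μ) / a) := ENNReal.ofReal_le_ofReal <|
      (le_div_iff₀ ha).mpr <| (mul_comm _ _).trans_le (hmarkov.trans hstop)

end Ville

section Azuma

variable {Ω : Type*} {m0 : MeasurableSpace Ω} {μ : Measure Ω}
  {ℱ : Filtration ℕ m0} {d : ℕ → Ω → ℝ} {κ : ℕ → ℝ}

noncomputable def hoeffdingProcess (d : ℕ → Ω → ℝ) (κ : ℕ → ℝ) (L : ℝ) (t : ℕ) (ω : Ω) : ℝ :=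
  Real.exp (L * ∑ i ∈ Finset.range t, d i ω - L ^ 2 / 2 * ∑ i ∈ Finset.range t, κ i ^ 2)

lemma hoeffdingProcess_zero (L : ℝ) : hoeffdingProcess d κ L 0 = 1 := by
  funext ω; simp [hoeffdingProcess]

lemma hoeffdingProcess_succ (L : ℝ) (t : ℕ) :
    hoeffdingProcess d κ L (t + 1) =
      (Real.exp (-(L ^ 2 / 2 * κ t ^ 2)) • hoeffdingProcess d κ L t) *
        fun ω => Real.exp (L * d t ω) := by
  funext ω
  simp only [hoeffdingProcess, Pi.mul_apply, Pi.smul_apply, smul_eq_mul, ← Real.exp_add,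
    Finset.sum_range_succ]
  ring_nf

variable [IsFiniteMeasure μ] in
theorem supermartingale_hoeffdingProcess (hd : ∀ i, StronglyMeasurable[ℱ (i + 1)] (d i))
    (hbd : ∀ i, ∀ᵐ ω ∂μ, |d i ω| ≤ κ i) (hcond : ∀ i, μ[d i|ℱ i] =ᵐ[μ] 0) (L : ℝ) :
    Supermartingale (hoeffdingProcess d κ L) ℱ μ := by
  have hsum (t : ℕ) : StronglyMeasurable[ℱ t] fun ω => ∑ i ∈ Finset.range t, d i ω :=
    Finset.stronglyMeasurable_fun_sum _ fun i hi =>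
      (hd i).mono (ℱ.mono (Finset.mem_range.mp hi))
  have hadapted : StronglyAdapted ℱ (hoeffdingProcess d κ L) := fun t =>
    Real.continuous_exp.comp_stronglyMeasurable
      (((hsum t).const_mul L).sub stronglyMeasurable_const)
  have hint (t : ℕ) : Integrable (hoeffdingProcess d κ L t) μ := by
    have hS : ∀ᵐ ω ∂μ, ∑ i ∈ Finset.range t, d i ω ∈
        Set.Icc (-∑ i ∈ Finset.range t, κ i) (∑ i ∈ Finset.range t, κ i) := by
      filter_upwards [ae_all_iff.mpr hbd] with ω hω
      exact abs_le.mp ((Finset.abs_sum_le_sum_abs _ _).trans (Finset.sum_le_sum fun i _ => hω i))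
    rw [show hoeffdingProcess d κ L t = _ from funext fun ω => Real.exp_sub _ _]
    exact (ProbabilityTheory.integrable_exp_mul_of_mem_Icc (t := L)
        ((hsum t).mono (ℱ.le t)).aestronglyMeasurable.aemeasurable hS).div_const _
  refine supermartingale_nat hadapted hint fun t => ?_
  have hexp_int : Integrable (fun ω => Real.exp (L * d t ω)) μ :=
    ProbabilityTheory.integrable_exp_mul_of_mem_Icc
      ((hd t).mono (ℱ.le _)).aestronglyMeasurable.aemeasurable ((hbd t).mono fun _ => abs_le.mp)
  rw [hoeffdingProcess_succ]
  filter_upwards [condExp_mul_of_stronglyMeasurable_left ((hadapted t).const_smul _)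
      (hoeffdingProcess_succ (d := d) (κ := κ) L t ▸ hint (t + 1)) hexp_int,
    condExp_exp_mul_le_of_abs_le (ℱ.le t) ((hd t).mono (ℱ.le _)).aestronglyMeasurable
      (hbd t) (hcond t) L] with ω hpull hle
  rw [hpull, Pi.mul_apply, Pi.smul_apply, smul_eq_mul, mul_right_comm]
  calc Real.exp (-(L ^ 2 / 2 * κ t ^ 2)) * μ[fun ω => Real.exp (L * d t ω)|ℱ t] ω *
        hoeffdingProcess d κ L t ω
      ≤ Real.exp (-(L ^ 2 / 2 * κ t ^ 2)) * Real.exp (L ^ 2 * κ t ^ 2 / 2) *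
        hoeffdingProcess d κ L t ω := by
        gcongr
        exact (Real.exp_pos _).le
    _ = hoeffdingProcess d κ L t ω := by
        rw [← Real.exp_add, neg_add_eq_zero.mpr (by ring), Real.exp_zero, one_mul]

variable [IsProbabilityMeasure μ]

theorem measure_exists_le_sum_le (hd : ∀ i, StronglyMeasurable[ℱ (i + 1)] (d i))
    (hbd : ∀ i, ∀ᵐ ω ∂μ, |d i ω| ≤ κ i) (hcond : ∀ i, μ[d i|ℱ i] =ᵐ[μ] 0) (L c : ℝ) (T : ℕ) :
    μ {ω | ∃ t ≤ T, c + L ^ 2 / 2 * ∑ i ∈ Finset.range t, κ i ^ 2 ≤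
        L * ∑ i ∈ Finset.range t, d i ω} ≤ ENNReal.ofReal (Real.exp (-c)) := by
  calc _ ≤ μ {ω | ∃ t ≤ T, Real.exp c ≤ hoeffdingProcess d κ L t ω} :=
        measure_mono <| by
          rintro ω ⟨t, ht, h⟩
          exact ⟨t, ht, Real.exp_le_exp.mpr (by linarith)⟩
    _ ≤ ENNReal.ofReal ((∫ ω, hoeffdingProcess d κ L 0 ω ∂μ) / Real.exp c) :=
        (supermartingale_hoeffdingProcess hd hbd hcond L).measure_exists_ge_le
          (fun _ _ => (Real.exp_pos _).le) (Real.exp_pos c) T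
    _ = ENNReal.ofReal (Real.exp (-c)) := by
        simp [hoeffdingProcess_zero, Real.exp_neg]

theorem measure_exists_abs_sum_ge_le (hd : ∀ i, StronglyMeasurable[ℱ (i + 1)] (d i))
    (hbd : ∀ i, ∀ᵐ ω ∂μ, |d i ω| ≤ κ i) (hcond : ∀ i, μ[d i|ℱ i] =ᵐ[μ] 0)
    {s : ℝ} (hs : 0 ≤ s) (T : ℕ) :
    μ {ω | ∃ t ≤ T, s * (∑ i ∈ Finset.range T, κ i ^ 2 + ∑ i ∈ Finset.range t, κ i ^ 2) ≤
        |∑ i ∈ Finset.range t, d i ω|}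
      ≤ ENNReal.ofReal (2 * Real.exp (-(2 * s ^ 2 * ∑ i ∈ Finset.range T, κ i ^ 2))) := by
  set c := 2 * s ^ 2 * ∑ i ∈ Finset.range T, κ i ^ 2
  have hneg := measure_exists_le_sum_le (d := fun i ω => -d i ω) (fun i => (hd i).neg)
    (fun i => by simpa only [abs_neg] using hbd i)
    (fun i => (condExp_neg (d i) (ℱ i)).trans (by simpa using (hcond i).neg)) (2 * s) c T
  refine (measure_mono ?_).trans <| (measure_union_le _ _).trans <|
    (add_le_add (measure_exists_le_sum_le hd hbd hcond (2 * s) c T) hneg).trans_eq ?_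
  · rintro ω ⟨t, ht, h⟩
    have key : c + (2 * s) ^ 2 / 2 * ∑ i ∈ Finset.range t, κ i ^ 2 ≤
        2 * s * |∑ i ∈ Finset.range t, d i ω| := by
      linarith [mul_le_mul_of_nonneg_left h (by positivity : (0 : ℝ) ≤ 2 * s)]
    rcases abs_cases (∑ i ∈ Finset.range t, d i ω) with ⟨habs, -⟩ | ⟨habs, -⟩
    · exact Or.inl ⟨t, ht, habs ▸ key⟩
    · exact Or.inr ⟨t, ht, by rwa [Finset.sum_neg_distrib, ← habs]⟩
  · rw [two_mul, ENNReal.ofReal_add (Real.exp_pos _).le (Real.exp_pos _).le]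

end Azuma

lemma abs_sub_one_sub_mul_le {x y γ b σ : ℝ} (hγ₀ : 0 ≤ γ) (hγ₁ : γ ≤ 1) (hx : |x| ≤ b)
    (hxy : |x - y| ≤ σ) : |x - (1 - γ) * y| ≤ γ * b + (1 - γ) * σ :=
  calc |x - (1 - γ) * y| = |γ * x + (1 - γ) * (x - y)| := by ring_nf
    _ ≤ |γ * x| + |(1 - γ) * (x - y)| := abs_add_le _ _
    _ = γ * |x| + (1 - γ) * |x - y| := by
        rw [abs_mul, abs_mul, abs_of_nonneg hγ₀, abs_of_nonneg (sub_nonneg.mpr hγ₁)]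
    _ ≤ γ * b + (1 - γ) * σ := by gcongr

lemma sqrt_div_mul_boundary_eq {c Γt ΓT Wt WT : ℝ} (ht : 0 < Γt) (hT : 0 < ΓT) :
    Real.sqrt (c / (2 * (ΓT ^ 2 * WT))) * (ΓT ^ 2 * WT * Γt / ΓT + Γt ^ 2 * Wt * ΓT / Γt) =
      Γt * (Real.sqrt (c / (2 * WT)) * (WT + Wt)) := by
  rw [show c / (2 * (ΓT ^ 2 * WT)) = c / (2 * WT) / ΓT ^ 2 by ring,
    Real.sqrt_div' _ (sq_nonneg ΓT), Real.sqrt_sq hT.le]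
  field_simp

section Oeuvre

variable {Ω : Type*} {m0 : MeasurableSpace Ω} {μ : Measure Ω}

/-- The increments of `Mₜ / Γₜ`, shifted so that index `i` is the increment at time `i + 1`. -/
noncomputable def oeuvreIncrement (Δ Δ' : ℕ → Ω → ℝ) (γ Γ : ℕ → ℝ) : ℕ → Ω → ℝ
  | 0 => Δ 1
  | i + 1 => (Γ (i + 2))⁻¹ • (Δ (i + 2) - (1 - γ (i + 2)) • Δ' (i + 2))

noncomputable def oeuvreScale (b : ℝ) (γ σ Γ : ℕ → ℝ) : ℕ → ℝ
  | 0 => b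
  | i + 1 => (Γ (i + 2))⁻¹ * (γ (i + 2) * b + (1 - γ (i + 2)) * σ (i + 2))

variable {Δ Δ' : ℕ → Ω → ℝ} {γ σ Γ : ℕ → ℝ} {b : ℝ}

lemma oeuvreIncrement_stronglyMeasurable {ℱ : Filtration ℕ m0}
    (hΔmeas : ∀ t ≥ 1, StronglyMeasurable[ℱ t] (Δ t))
    (hΔ'meas : ∀ t ≥ 1, StronglyMeasurable[ℱ t] (Δ' t)) (i : ℕ) :
    StronglyMeasurable[ℱ (i + 1)] (oeuvreIncrement Δ Δ' γ Γ i) := by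
  cases i with
  | zero => exact hΔmeas 1 le_rfl
  | succ i =>
    exact ((hΔmeas (i + 2) (by omega)).sub
      ((hΔ'meas (i + 2) (by omega)).const_smul _)).const_smul _

lemma abs_oeuvreIncrement_le (hΔbd : ∀ t ≥ 1, ∀ᵐ ω ∂μ, |Δ t ω| ≤ b)
    (hstab : ∀ t ≥ 2, ∀ᵐ ω ∂μ, |Δ t ω - Δ' t ω| ≤ σ t)
    (hγ : ∀ t ≥ 2, γ t ∈ Set.Ico (0 : ℝ) 1) (hΓpos : ∀ t ≥ 1, 0 < Γ t) (i : ℕ) :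
    ∀ᵐ ω ∂μ, |oeuvreIncrement Δ Δ' γ Γ i ω| ≤ oeuvreScale b γ σ Γ i := by
  cases i with
  | zero => exact hΔbd 1 le_rfl
  | succ i =>
    filter_upwards [hΔbd (i + 2) (by omega), hstab (i + 2) (by omega)] with ω hx hxy
    simp only [oeuvreIncrement, oeuvreScale, Pi.smul_apply, Pi.sub_apply, smul_eq_mul, abs_mul,
      abs_inv, abs_of_pos (hΓpos (i + 2) (by omega))]
    exact mul_le_mul_of_nonneg_left
      (abs_sub_one_sub_mul_le (hγ (i + 2) (by omega)).1 (hγ (i + 2) (by omega)).2.le hx hxy)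
      (inv_nonneg.mpr (hΓpos (i + 2) (by omega)).le)

lemma condExp_oeuvreIncrement [IsFiniteMeasure μ] {ℱ : Filtration ℕ m0}
    (hΔmeas : ∀ t ≥ 1, StronglyMeasurable[ℱ t] (Δ t))
    (hΔ'meas : ∀ t ≥ 1, StronglyMeasurable[ℱ t] (Δ' t))
    (hΔcond : ∀ t ≥ 1, μ[Δ t | ℱ (t - 1)] =ᵐ[μ] 0)
    (hΔ'cond : ∀ t ≥ 1, μ[Δ' t | ℱ (t - 1)] =ᵐ[μ] 0)
    (hΔbd : ∀ t ≥ 1, ∀ᵐ ω ∂μ, |Δ t ω| ≤ b)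
    (hstab : ∀ t ≥ 2, ∀ᵐ ω ∂μ, |Δ t ω - Δ' t ω| ≤ σ t) (i : ℕ) :
    μ[oeuvreIncrement Δ Δ' γ Γ i|ℱ i] =ᵐ[μ] 0 := by
  cases i with
  | zero => exact hΔcond 1 le_rfl
  | succ i =>
    have hΔint : Integrable (Δ (i + 2)) μ :=
      .of_bound ((hΔmeas _ (by omega)).mono (ℱ.le _)).aestronglyMeasurable b (hΔbd _ (by omega))
    have hΔ'int : Integrable (Δ' (i + 2)) μ := by
      refine .of_bound ((hΔ'meas _ (by omega)).mono (ℱ.le _)).aestronglyMeasurable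
        (b + σ (i + 2)) ?_
      filter_upwards [hΔbd (i + 2) (by omega), hstab (i + 2) (by omega)] with ω hx hxy
      calc ‖Δ' (i + 2) ω‖ = |Δ (i + 2) ω - (Δ (i + 2) ω - Δ' (i + 2) ω)| := by
            rw [Real.norm_eq_abs, sub_sub_cancel]
        _ ≤ b + σ (i + 2) := (abs_sub _ _).trans (add_le_add hx hxy)
    have hΔcond' : μ[Δ (i + 2)|ℱ (i + 1)] =ᵐ[μ] 0 := hΔcond (i + 2) (by omega)
    have hΔ'cond' : μ[Δ' (i + 2)|ℱ (i + 1)] =ᵐ[μ] 0 := hΔ'cond (i + 2) (by omega)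
    filter_upwards [condExp_smul (m := ℱ (i + 1)) (μ := μ) (Γ (i + 2))⁻¹
        (Δ (i + 2) - (1 - γ (i + 2)) • Δ' (i + 2)),
      condExp_sub hΔint (hΔ'int.smul (1 - γ (i + 2))) (ℱ (i + 1)),
      condExp_smul (m := ℱ (i + 1)) (μ := μ) (1 - γ (i + 2)) (Δ' (i + 2)),
      hΔcond', hΔ'cond'] with ω h₁ h₂ h₃ h₄ h₅
    simp only [oeuvreIncrement, Pi.smul_apply, Pi.sub_apply, Pi.zero_apply, smul_eq_mul]
      at h₁ h₂ h₃ h₄ h₅ ⊢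
    rw [h₁, h₂, h₃, h₄, h₅]
    ring

lemma decayProduct_pos (hγ : ∀ t ≥ 2, γ t ∈ Set.Ico (0 : ℝ) 1) (t : ℕ) :
    0 < ∏ i ∈ Finset.Icc 2 t, (1 - γ i) :=
  Finset.prod_pos fun i hi => sub_pos.mpr (hγ i (Finset.mem_Icc.mp hi).1).2

lemma decayProduct_succ (hΓ : ∀ t ≥ 1, Γ t = ∏ i ∈ Finset.Icc 2 t, (1 - γ i)) (k : ℕ) :
    Γ (k + 2) = Γ (k + 1) * (1 - γ (k + 2)) := by
  rw [hΓ _ (by omega), hΓ _ (by omega), Finset.prod_Icc_succ_top (by omega)]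

lemma oeuvreProcess_eq_mul_sum {M : ℕ → Ω → ℝ}
    (hγ : ∀ t ≥ 2, γ t ∈ Set.Ico (0 : ℝ) 1)
    (hΓ : ∀ t ≥ 1, Γ t = ∏ i ∈ Finset.Icc 2 t, (1 - γ i)) (hM1 : M 1 = Δ 1)
    (hMrec : ∀ t ≥ 2, ∀ ω, M t ω = Δ t ω - (1 - γ t) * Δ' t ω + (1 - γ t) * M (t - 1) ω)
    {t : ℕ} (ht : 1 ≤ t) (ω : Ω) :
    M t ω = Γ t * ∑ i ∈ Finset.range t, oeuvreIncrement Δ Δ' γ Γ i ω := by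
  induction t, ht using Nat.le_induction with
  | base => simp [hM1, hΓ 1 le_rfl, oeuvreIncrement]
  | succ t ht ih =>
    obtain ⟨k, rfl⟩ := Nat.exists_eq_add_of_le' ht
    have hΓ₀ : Γ (k + 1) ≠ 0 := (hΓ (k + 1) (by omega) ▸ decayProduct_pos hγ _).ne'
    have hγ₁ : 1 - γ (k + 2) ≠ 0 := (sub_pos.mpr (hγ (k + 2) (by omega)).2).ne'
    change M (k + 2) ω = Γ (k + 2) * ∑ i ∈ Finset.range (k + 2), oeuvreIncrement Δ Δ' γ Γ i ω
    rw [hMrec (k + 2) (by omega), show k + 2 - 1 = k + 1 from rfl, ih,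
      Finset.sum_range_succ _ (k + 1), oeuvreIncrement.eq_2, decayProduct_succ hΓ]
    simp only [Pi.smul_apply, Pi.sub_apply, smul_eq_mul]
    field_simp
    ring

lemma oeuvreVariance_eq_sq_mul_sum {V : ℕ → ℝ}
    (hγ : ∀ t ≥ 2, γ t ∈ Set.Ico (0 : ℝ) 1)
    (hΓ : ∀ t ≥ 1, Γ t = ∏ i ∈ Finset.Icc 2 t, (1 - γ i)) (hV1 : V 1 = b ^ 2)
    (hVrec : ∀ t ≥ 2, V t = (γ t * b + (1 - γ t) * σ t) ^ 2 + (1 - γ t) ^ 2 * V (t - 1))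
    {t : ℕ} (ht : 1 ≤ t) :
    V t = Γ t ^ 2 * ∑ i ∈ Finset.range t, oeuvreScale b γ σ Γ i ^ 2 := by
  induction t, ht using Nat.le_induction with
  | base => simp [hV1, hΓ 1 le_rfl, oeuvreScale]
  | succ t ht ih =>
    obtain ⟨k, rfl⟩ := Nat.exists_eq_add_of_le' ht
    have hΓ₀ : Γ (k + 1) ≠ 0 := (hΓ (k + 1) (by omega) ▸ decayProduct_pos hγ _).ne'
    have hγ₁ : 1 - γ (k + 2) ≠ 0 := (sub_pos.mpr (hγ (k + 2) (by omega)).2).ne'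
    change V (k + 2) = Γ (k + 2) ^ 2 * ∑ i ∈ Finset.range (k + 2), oeuvreScale b γ σ Γ i ^ 2
    rw [hVrec (k + 2) (by omega), show k + 2 - 1 = k + 1 from rfl, ih,
      Finset.sum_range_succ _ (k + 1), oeuvreScale.eq_2, decayProduct_succ hΓ]
    field_simp
    ring

end Oeuvre

theorem oeuvre_time_uniform_concentration_general
    {Ω : Type*} {m0 : MeasurableSpace Ω} {μ : Measure Ω} [IsProbabilityMeasure μ]
    (ℱ : Filtration ℕ m0)
    (Δ Δ' : ℕ → Ω → ℝ) (γ σ : ℕ → ℝ) (b : ℝ) (hb : 0 < b)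
    (hΔmeas : ∀ t ≥ 1, StronglyMeasurable[ℱ t] (Δ t))
    (hΔ'meas : ∀ t ≥ 1, StronglyMeasurable[ℱ t] (Δ' t))
    (hΔcond : ∀ t ≥ 1, μ[Δ t | ℱ (t - 1)] =ᵐ[μ] 0)
    (hΔ'cond : ∀ t ≥ 1, μ[Δ' t | ℱ (t - 1)] =ᵐ[μ] 0)
    (hΔbd : ∀ t ≥ 1, ∀ᵐ ω ∂μ, |Δ t ω| ≤ b)
    (hstab : ∀ t ≥ 2, ∀ᵐ ω ∂μ, |Δ t ω - Δ' t ω| ≤ σ t)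
    (hγ : ∀ t ≥ 2, γ t ∈ Set.Ico (0 : ℝ) 1)
    (Γ : ℕ → ℝ) (hΓ : ∀ t ≥ 1, Γ t = ∏ i ∈ Finset.Icc 2 t, (1 - γ i))
    (M : ℕ → Ω → ℝ)
    (hM1 : M 1 = Δ 1)
    (hMrec : ∀ t ≥ 2, ∀ ω,
      M t ω = Δ t ω - (1 - γ t) * Δ' t ω + (1 - γ t) * M (t - 1) ω)
    (V : ℕ → ℝ) (hV1 : V 1 = b ^ 2)
    (hVrec : ∀ t ≥ 2,
      V t = (γ t * b + (1 - γ t) * σ t) ^ 2 + (1 - γ t) ^ 2 * V (t - 1)) :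
    ∀ c > (0 : ℝ), ∀ T ≥ 1,
      μ {ω | ∃ t, 1 ≤ t ∧ t ≤ T ∧
          Real.sqrt (c / (2 * V T)) * (V T * Γ t / Γ T + V t * Γ T / Γ t) ≤ |M t ω|}
        ≤ ENNReal.ofReal (2 * Real.exp (-c)) := by
  intro c hc T hT
  set W := fun t => ∑ i ∈ Finset.range t, oeuvreScale b γ σ Γ i ^ 2
  have hΓpos : ∀ t ≥ 1, 0 < Γ t := fun t ht => hΓ t ht ▸ decayProduct_pos hγ t
  have hW : 0 < W T := (pow_pos hb 2).trans_le <|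
    Finset.single_le_sum (f := fun i => oeuvreScale b γ σ Γ i ^ 2) (fun i _ => sq_nonneg _)
      (Finset.mem_range.mpr hT)
  have hc : 2 * Real.sqrt (c / (2 * W T)) ^ 2 * W T = c := by
    rw [Real.sq_sqrt (by positivity)]; field_simp
  have key := measure_exists_abs_sum_ge_le (μ := μ)
    (oeuvreIncrement_stronglyMeasurable (γ := γ) (Γ := Γ) hΔmeas hΔ'meas)
    (abs_oeuvreIncrement_le hΔbd hstab hγ hΓpos)
    (condExp_oeuvreIncrement hΔmeas hΔ'meas hΔcond hΔ'cond hΔbd hstab)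
    (Real.sqrt_nonneg (c / (2 * W T))) T
  rw [hc] at key
  refine le_trans (measure_mono ?_) key
  rintro ω ⟨t, ht, htT, h⟩
  refine ⟨t, htT, le_of_mul_le_mul_left ?_ (hΓpos t ht)⟩
  rwa [oeuvreVariance_eq_sq_mul_sum hγ hΓ hV1 hVrec hT,
    oeuvreVariance_eq_sq_mul_sum hγ hΓ hV1 hVrec ht, oeuvreProcess_eq_mul_sum hγ hΓ hM1 hMrec ht,
    sqrt_div_mul_boundary_eq (hΓpos t ht) (hΓpos T hT), abs_mul, abs_of_pos (hΓpos t ht)] at h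

/-- Time-uniform concentration for the centered OEUVRE process: with `|Δ_t| ≤ b`,
`|Δ_t - Δ'_t| ≤ σ_t`, decay products `Γ_t = ∏_{i=2}^t (1-γ_i)` and variance
recursion `V_t`, for every `c > 0` and `T ≥ 1`,
`P(∃ t ∈ {1,…,T}, |M_t| ≥ √(c/(2V_T))·(V_T Γ_t/Γ_T + V_t Γ_T/Γ_t)) ≤ 2 exp(-c)`. -/
theorem oeuvre_time_uniform_concentration
    {Ω : Type*} {m0 : MeasurableSpace Ω} {μ : Measure Ω} [IsProbabilityMeasure μ]
    (ℱ : Filtration ℕ m0)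
    (Δ Δ' : ℕ → Ω → ℝ) (γ σ : ℕ → ℝ) (b : ℝ) (hb : 0 < b)
    (hΔmeas : ∀ t ≥ 1, StronglyMeasurable[ℱ t] (Δ t))
    (hΔ'meas : ∀ t ≥ 1, StronglyMeasurable[ℱ t] (Δ' t))
    (hΔcond : ∀ t ≥ 1, μ[Δ t | ℱ (t - 1)] =ᵐ[μ] 0)
    (hΔ'cond : ∀ t ≥ 1, μ[Δ' t | ℱ (t - 1)] =ᵐ[μ] 0)
    (hΔbd : ∀ t ≥ 1, ∀ᵐ ω ∂μ, |Δ t ω| ≤ b)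
    (hσnn : ∀ t ≥ 2, 0 ≤ σ t)
    (hstab : ∀ t ≥ 2, ∀ᵐ ω ∂μ, |Δ t ω - Δ' t ω| ≤ σ t)
    (hγ : ∀ t ≥ 2, γ t ∈ Set.Ico (0 : ℝ) 1)
    (Γ : ℕ → ℝ) (hΓ : ∀ t ≥ 1, Γ t = ∏ i ∈ Finset.Icc 2 t, (1 - γ i))
    (M : ℕ → Ω → ℝ)
    (hM1 : M 1 = Δ 1)
    (hMrec : ∀ t ≥ 2, ∀ ω,
      M t ω = Δ t ω - (1 - γ t) * Δ' t ω + (1 - γ t) * M (t - 1) ω)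
    (V : ℕ → ℝ) (hV1 : V 1 = b ^ 2)
    (hVrec : ∀ t ≥ 2,
      V t = (γ t * b + (1 - γ t) * σ t) ^ 2 + (1 - γ t) ^ 2 * V (t - 1)) :
    ∀ c > (0 : ℝ), ∀ T ≥ 1,
      μ {ω | ∃ t, 1 ≤ t ∧ t ≤ T ∧
          Real.sqrt (c / (2 * V T)) * (V T * Γ t / Γ T + V t * Γ T / Γ t) ≤ |M t ω|}
        ≤ ENNReal.ofReal (2 * Real.exp (-c)) :=
  oeuvre_time_uniform_concentration_general ℱ Δ Δ' γ σ b hb hΔmeas hΔ'meas hΔcond hΔ'cond hΔbd hstab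
    hγ Γ hΓ M hM1 hMrec V hV1 hVrec
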